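/- For every x > 0: (i) the limit as τ → 1⁻ of J_fwd(x, τ) equals (1/2)·(log x)², and (ii) the limit as τ → 0⁺ of J_fwd(x, τ) equals J_BS(x). -/

import Mathlib

/-!
A competitor for `J_fwd(x, τ)` has `exp ∘ f` averaging to `x` over `[τ, 1]`, so `f` takes the
value `log x` at some time `t ≤ 1`, and Cauchy–Schwarz gives `(log x)² ≤ t ∫₀¹ f'²`; hence
`J_fwd(x, τ) ≥ (log x)² / 2`. The path rising linearly to `log x` at time `τ` and constant
afterwards costs `(log x)² / (2τ)`, which gives (i).

For (ii), paths are spliced: a linear ramp on `[0, σ]` followed by the increments of a given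
path on `[τ, 1]`, time-changed onto `[σ, 1]`. Waiting until `τ` and then running a `J_BS`
competitor at speed `1 / (1 - τ)` shows `J_fwd(x, τ) ≤ J_BS(x) / (1 - τ)`. Conversely, a `J_fwd`
competitor of bounded energy has `|f(τ)| = O(√τ)` by Cauchy–Schwarz; compressing it onto
`[√τ, 1]` after a ramp to `f(τ) + l`, with the shift `l = O(√τ)` chosen by the intermediate value theorem so that the
average of `exp` over `[0, 1]` is again `x`, gives a `J_BS` competitor whose energy exceeds that
of `f` by `O(√τ)`.
-/

open MeasureTheory Set

/-- `IsAC f g` expresses that `f` is absolutely continuous on `[0,1]` with `f 0 = 0`: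
`g` is its (integrable) derivative, `g²` is integrable (finite energy), and
`f t = ∫₀ᵗ g(s) ds` on `[0,1]`. -/
def IsAC (f g : ℝ → ℝ) : Prop :=
  IntervalIntegrable g volume 0 1 ∧
  IntervalIntegrable (fun t => (g t) ^ 2) volume 0 1 ∧
  ∀ t ∈ Icc (0:ℝ) 1, f t = ∫ s in (0:ℝ)..t, g s

/-- The energy `(1/2)∫₀¹ (f'(t))² dt` of a path with derivative `g`. -/
noncomputable def energy (g : ℝ → ℝ) : ℝ :=
  (1 / 2) * ∫ t in (0:ℝ)..1, (g t) ^ 2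

/-- The rate function `J_BS(x)` for an Asian option with averaging starting at time `0`
in the Black-Scholes model: the infimum of `(1/2)∫₀¹ (φ'(u))² du` over absolutely
continuous `φ` with `φ(0) = 0` and `∫₀¹ exp(φ(u)) du = x`. -/
noncomputable def JBS (x : ℝ) : ℝ :=
  sInf { E | ∃ f g : ℝ → ℝ, IsAC f g ∧ (∫ u in (0:ℝ)..1, Real.exp (f u)) = x ∧ E = energy g }

/-- The rate function `J_fwd(x, τ)` for a forward start Asian option in the
Black-Scholes model: the infimum of `(1/2)∫₀¹ (f'(t))² dt` over absolutely continuous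
`f` with `f(0) = 0` and `(1/(1-τ))∫_τ¹ exp(f(t)) dt = x`. -/
noncomputable def Jfwd (x τ : ℝ) : ℝ :=
  sInf { E | ∃ f g : ℝ → ℝ, IsAC f g ∧
    (1 / (1 - τ)) * (∫ t in τ..1, Real.exp (f t)) = x ∧ E = energy g }

open Filter Topology intervalIntegral

lemma sq_integral_le_mul_integral_sq {g : ℝ → ℝ} {a b : ℝ} (hab : a ≤ b)
    (hg : IntervalIntegrable g volume a b)
    (hg2 : IntervalIntegrable (fun t => g t ^ 2) volume a b) :
    (∫ t in a..b, g t) ^ 2 ≤ (b - a) * ∫ t in a..b, g t ^ 2 := by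
  rcases hab.eq_or_lt with rfl | hab
  · simp
  have hvol : volume (uIoc a b) ≠ 0 := by simp [uIoc_of_le hab.le, hab]
  have jensen := (even_two.convexOn_pow (𝕜 := ℝ)).map_set_average_le
    (continuous_pow 2).continuousOn isClosed_univ hvol (by simp) (by simp)
    hg.def' hg2.def'
  rw [interval_average_eq_div, interval_average_eq_div, div_pow,
    div_le_div_iff₀ (by nlinarith) (by linarith)] at jensen
  nlinarith

lemma exists_eq_of_integral_eq_mul {F : ℝ → ℝ} {a b y : ℝ} (hab : a < b)
    (hF : ContinuousOn F (Icc a b)) (h : ∫ t in a..b, F t = (b - a) * y) :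
    ∃ t ∈ Icc a b, F t = y := by
  have hconv : Convex ℝ (F '' Icc a b) := (isPreconnected_Icc.image F hF).convex
  have hclosed : IsClosed (F '' Icc a b) := (isCompact_Icc.image_of_continuousOn hF).isClosed
  have hvol : volume (uIoc a b) ≠ 0 := by simp [uIoc_of_le hab.le, hab]
  have hmem : ∀ t ∈ uIoc a b, F t ∈ F '' Icc a b := fun t ht =>
    mem_image_of_mem F (Ioc_subset_Icc_self (by rwa [uIoc_of_le hab.le] at ht))
  have := hconv.set_average_mem hclosed hvol (by simp)
    (ae_restrict_of_forall_mem measurableSet_uIoc hmem) (hF.intervalIntegrable_of_Icc hab.le).def'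
  rwa [interval_average_eq_div, h, mul_div_cancel_left₀ _ (sub_pos.mpr hab).ne'] at this

noncomputable def expMean (z : ℝ) : ℝ := ∫ s in (0:ℝ)..1, Real.exp (z * s)

@[fun_prop]
lemma continuous_expMean : Continuous expMean :=
  continuous_parametric_intervalIntegral_of_continuous' (by fun_prop) 0 1

lemma expMean_pos (z : ℝ) : 0 < expMean z :=
  intervalIntegral_pos_of_pos (Continuous.intervalIntegrable (by fun_prop) _ _)
    (fun _ => Real.exp_pos _) zero_lt_one

lemma expMean_le_exp_abs (z : ℝ) : expMean z ≤ Real.exp |z| := by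
  calc expMean z ≤ ∫ _ in (0:ℝ)..1, Real.exp |z| := by
        refine integral_mono_on zero_le_one
          (Continuous.intervalIntegrable (by fun_prop) _ _) intervalIntegrable_const fun s hs => ?_
        refine Real.exp_le_exp.mpr ((le_abs_self _).trans ?_)
        rw [abs_mul, abs_of_nonneg hs.1]
        exact mul_le_of_le_one_right (abs_nonneg z) hs.2
    _ = Real.exp |z| := by simp

lemma integral_exp_mul_eq_mul_expMean (a σ : ℝ) :
    ∫ u in (0:ℝ)..σ, Real.exp (a * u) = σ * expMean (a * σ) := by
  have := smul_integral_comp_mul_left (fun u => Real.exp (a * u)) σ (a := 0) (b := 1)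
  simp only [mul_zero, mul_one, smul_eq_mul] at this
  rw [← this, expMean]
  simp only [mul_assoc]

lemma expMean_of_ne_zero {z : ℝ} (hz : z ≠ 0) : expMean z = (Real.exp z - 1) / z := by
  have := integral_comp_mul_left (fun u => Real.exp u) hz (a := 0) (b := 1)
  rw [expMean, this]
  simp [div_eq_inv_mul]

lemma exists_expMean_eq {x : ℝ} (hx : 0 < x) : ∃ c, expMean c = x := by
  have hlow : expMean (-x⁻¹) ≤ x := by
    rw [expMean_of_ne_zero (by simpa using hx.ne'), div_neg, div_inv_eq_mul]
    nlinarith [Real.exp_pos (-x⁻¹)]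
  have hhigh : x ≤ expMean (2 * x) := by
    rw [expMean_of_ne_zero (by positivity), le_div_iff₀ (by positivity)]
    nlinarith [Real.quadratic_le_exp_of_nonneg (by positivity : 0 ≤ 2 * x)]
  obtain ⟨c, -, hc⟩ := intermediate_value_uIcc continuous_expMean.continuousOn
    (mem_uIcc_of_le hlow hhigh)
  exact ⟨c, hc⟩

def FiniteEnergy (g : ℝ → ℝ) : Prop :=
  IntervalIntegrable g volume 0 1 ∧ IntervalIntegrable (fun t => g t ^ 2) volume 0 1

def Admissible (x τ : ℝ) (g : ℝ → ℝ) : Prop :=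
  FiniteEnergy g ∧ ∫ t in τ..1, Real.exp (∫ s in (0:ℝ)..t, g s) = (1 - τ) * x

lemma energy_nonneg (g : ℝ → ℝ) : 0 ≤ energy g :=
  mul_nonneg (by norm_num) (integral_nonneg zero_le_one fun _ _ => sq_nonneg _)

lemma Jfwd_eq_sInf_energy_image {x τ : ℝ} (hτ0 : 0 ≤ τ) (hτ1 : τ < 1) :
    Jfwd x τ = sInf (energy '' {g | Admissible x τ g}) := by
  have h1τ : 1 - τ ≠ 0 := by linarith
  unfold Jfwd
  congr 1
  ext E
  constructor
  · rintro ⟨f, g, ⟨hg, hg2, hf⟩, hfx, rfl⟩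
    refine ⟨g, ⟨⟨hg, hg2⟩, ?_⟩, rfl⟩
    rw [integral_congr fun t ht => congrArg Real.exp (hf t ?_).symm]
    · field_simp at hfx
      linarith
    · rw [uIcc_of_le hτ1.le] at ht
      exact ⟨hτ0.trans ht.1, ht.2⟩
  · rintro ⟨g, ⟨⟨hg, hg2⟩, hgx⟩, rfl⟩
    exact ⟨_, g, ⟨hg, hg2, fun _ _ => rfl⟩, by rw [hgx]; field_simp, rfl⟩

lemma JBS_eq_Jfwd_zero (x : ℝ) : JBS x = Jfwd x 0 := by
  simp [JBS, Jfwd]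

lemma Jfwd_le_energy {x τ : ℝ} {g : ℝ → ℝ} (hτ0 : 0 ≤ τ) (hτ1 : τ < 1)
    (hg : Admissible x τ g) : Jfwd x τ ≤ energy g := by
  rw [Jfwd_eq_sInf_energy_image hτ0 hτ1]
  exact csInf_le ⟨0, by rintro _ ⟨g, -, rfl⟩; exact energy_nonneg g⟩ ⟨g, hg, rfl⟩

lemma le_Jfwd {x τ b : ℝ} (hτ0 : 0 ≤ τ) (hτ1 : τ < 1) (hne : ∃ g, Admissible x τ g)
    (h : ∀ g, Admissible x τ g → b ≤ energy g) : b ≤ Jfwd x τ := by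
  rw [Jfwd_eq_sInf_energy_image hτ0 hτ1]
  obtain ⟨g, hg⟩ := hne
  exact le_csInf ⟨_, g, hg, rfl⟩ (by rintro _ ⟨g, hg, rfl⟩; exact h g hg)

lemma FiniteEnergy.sq_integral_le {g : ℝ → ℝ} (hg : FiniteEnergy g) {t : ℝ}
    (ht : t ∈ Icc (0:ℝ) 1) : (∫ s in (0:ℝ)..t, g s) ^ 2 ≤ t * ∫ s in (0:ℝ)..1, g s ^ 2 := by
  have hsub : uIcc 0 t ⊆ uIcc 0 1 := uIcc_subset_uIcc_left (by rwa [uIcc_of_le zero_le_one])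
  calc (∫ s in (0:ℝ)..t, g s) ^ 2 ≤ (t - 0) * ∫ s in (0:ℝ)..t, g s ^ 2 :=
        sq_integral_le_mul_integral_sq ht.1 (hg.1.mono_set hsub) (hg.2.mono_set hsub)
    _ ≤ t * ∫ s in (0:ℝ)..1, g s ^ 2 := by
        rw [sub_zero]
        exact mul_le_mul_of_nonneg_left (integral_mono_interval le_rfl ht.1 ht.2
          (ae_of_all _ fun _ => sq_nonneg _) hg.2) ht.1

lemma finiteEnergy_const (c : ℝ) : FiniteEnergy fun _ => c :=
  ⟨intervalIntegrable_const, intervalIntegrable_const⟩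

-- The derivative of the path that rises with slope `a` on `[0, σ]` and then runs through the
-- increments of `t ↦ ∫₀ᵗ g` on `[τ, 1]`, time-changed affinely onto `[σ, 1]`.
noncomputable def spliceRamp (g : ℝ → ℝ) (a σ τ : ℝ) (u : ℝ) : ℝ :=
  if u ≤ σ then a else (1 - τ) / (1 - σ) * g (τ + (1 - τ) / (1 - σ) * (u - σ))

section spliceRamp

variable {g : ℝ → ℝ} {a σ τ : ℝ}

lemma spliceRamp_of_le {u : ℝ} (hu : u ≤ σ) : spliceRamp g a σ τ u = a := if_pos hu

lemma spliceRamp_of_lt {u : ℝ} (hu : σ < u) :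
    spliceRamp g a σ τ u = (1 - τ) / (1 - σ) * g (τ + (1 - τ) / (1 - σ) * (u - σ)) :=
  if_neg hu.not_ge

lemma spliceRamp_sq (u : ℝ) :
    spliceRamp g a σ τ u ^ 2
      = spliceRamp (fun t => (1 - τ) / (1 - σ) * g t ^ 2) (a ^ 2) σ τ u := by
  unfold spliceRamp
  split_ifs <;> ring

lemma integral_spliceRamp_of_le {u : ℝ} (hu : u ∈ Icc 0 σ) :
    ∫ s in (0:ℝ)..u, spliceRamp g a σ τ s = a * u := by
  rw [integral_congr (g := fun _ => a) fun s hs => spliceRamp_of_le ?_]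
  · simp [mul_comm]
  · rw [uIcc_of_le hu.1] at hs
    exact hs.2.trans hu.2

lemma integral_exp_integral_spliceRamp_of_le (hσ : 0 ≤ σ) :
    ∫ u in (0:ℝ)..σ, Real.exp (∫ s in (0:ℝ)..u, spliceRamp g a σ τ s)
      = σ * expMean (a * σ) := by
  rw [← integral_exp_mul_eq_mul_expMean]
  refine integral_congr fun u hu => ?_
  rw [uIcc_of_le hσ] at hu
  simp only [integral_spliceRamp_of_le hu]

variable (hσ : σ ∈ Ioo 0 1) (hτ : τ ∈ Ico 0 1)
include hσ hτ

lemma intervalIntegrable_spliceRamp (hg : IntervalIntegrable g volume τ 1) :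
    IntervalIntegrable (spliceRamp g a σ τ) volume 0 1 := by
  set α := (1 - τ) / (1 - σ)
  have hα0 : α ≠ 0 := div_ne_zero (by linarith [hτ.2]) (by linarith [hσ.2])
  have hαα : α * (1 - σ) = 1 - τ := div_mul_cancel₀ _ (by linarith [hσ.2])
  have hleft : IntervalIntegrable (spliceRamp g a σ τ) volume 0 σ := by
    refine (intervalIntegrable_congr fun u hu => ?_).mp (intervalIntegrable_const (c := a))
    rw [uIoc_of_le hσ.1.le] at hu
    exact (spliceRamp_of_le hu.2).symm
  have hright : IntervalIntegrable (spliceRamp g a σ τ) volume σ 1 := by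
    have hcomp : IntervalIntegrable (fun u => g (τ + α * (u - σ))) volume σ 1 := by
      have := (hg.comp_mul_left (c := α)).comp_add_right (τ / α - σ)
      convert this using 2 with u
      · congr 1; field_simp; ring
      · field_simp; ring
      · field_simp; linarith
    refine (intervalIntegrable_congr fun u hu => ?_).mp (hcomp.const_mul α)
    rw [uIoc_of_le hσ.2.le] at hu
    exact (spliceRamp_of_lt hu.1).symm
  exact hleft.trans hright

lemma integral_spliceRamp_of_ge (hg : IntervalIntegrable g volume τ 1) {u : ℝ}
    (hu : u ∈ Icc σ 1) :
    ∫ s in (0:ℝ)..u, spliceRamp g a σ τ s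
      = a * σ + ∫ t in τ..τ + (1 - τ) / (1 - σ) * (u - σ), g t := by
  set α := (1 - τ) / (1 - σ) with hα
  have hα0 : 0 < α := div_pos (by linarith [hτ.2]) (by linarith [hσ.2])
  have hint := intervalIntegrable_spliceRamp (a := a) hσ hτ hg
  rw [← integral_add_adjacent_intervals (b := σ)
    (hint.mono_set (uIcc_subset_uIcc_left (by simp [hσ.1.le, hσ.2.le])))
    (hint.mono_set (uIcc_subset_uIcc (by simp [hσ.1.le, hσ.2.le])
      (by simp [hu.2, hσ.1.le.trans hu.1]))),
    integral_spliceRamp_of_le ⟨hσ.1.le, le_rfl⟩]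
  congr 1
  rw [intervalIntegral.integral_congr_ae (g := fun s => α * g (α * s + (τ - α * σ))) ?_]
  · rw [intervalIntegral.integral_const_mul, integral_comp_mul_add _ hα0.ne', smul_eq_mul,
      ← mul_assoc, mul_inv_cancel₀ hα0.ne', one_mul]
    congr 1 <;> ring
  · filter_upwards with s hs
    rw [uIoc_of_le hu.1] at hs
    rw [spliceRamp_of_lt hs.1, ← hα]
    congr 2
    ring

lemma integral_sq_spliceRamp (hg2 : IntervalIntegrable (fun t => g t ^ 2) volume τ 1) :
    ∫ u in (0:ℝ)..1, spliceRamp g a σ τ u ^ 2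
      = a ^ 2 * σ + (1 - τ) / (1 - σ) * ∫ t in τ..1, g t ^ 2 := by
  simp_rw [spliceRamp_sq]
  rw [integral_spliceRamp_of_ge hσ hτ (hg2.const_mul _) ⟨hσ.2.le, le_rfl⟩,
    intervalIntegral.integral_const_mul, div_mul_cancel₀ _ (by linarith [hσ.2] : 1 - σ ≠ 0),
    add_sub_cancel]

lemma integral_exp_integral_spliceRamp_of_ge (hg : IntervalIntegrable g volume 0 1) :
    ∫ u in σ..1, Real.exp (∫ s in (0:ℝ)..u, spliceRamp g a σ τ s)
      = (1 - σ) / (1 - τ) * Real.exp (a * σ - ∫ s in (0:ℝ)..τ, g s)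
          * ∫ t in τ..1, Real.exp (∫ s in (0:ℝ)..t, g s) := by
  set α := (1 - τ) / (1 - σ) with hα
  have hα0 : 0 < α := div_pos (by linarith [hτ.2]) (by linarith [hσ.2])
  have hαα : α * (1 - σ) = 1 - τ := div_mul_cancel₀ _ (by linarith [hσ.2])
  have hint {w : ℝ} (hw : w ∈ Icc 0 1) : IntervalIntegrable g volume 0 w :=
    hg.mono_set (uIcc_subset_uIcc_left (by rwa [uIcc_of_le zero_le_one]))
  have hpath : EqOn (fun u => Real.exp (∫ s in (0:ℝ)..u, spliceRamp g a σ τ s))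
      (fun u => Real.exp (a * σ - ∫ s in (0:ℝ)..τ, g s)
        * Real.exp (∫ s in (0:ℝ)..α * u + (τ - α * σ), g s)) (uIcc σ 1) := by
    intro u hu
    rw [uIcc_of_le hσ.2.le] at hu
    have hw : τ + α * (u - σ) = α * u + (τ - α * σ) := by ring
    have hw0 : 0 ≤ α * (u - σ) := mul_nonneg hα0.le (by linarith [hu.1])
    have hw1 : α * (u - σ) ≤ 1 - τ :=
      hαα ▸ mul_le_mul_of_nonneg_left (by linarith [hu.2]) hα0.le
    have hgτ := hg.mono_set (uIcc_subset_uIcc (a₁ := τ) (b₁ := 1)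
      (by rw [uIcc_of_le zero_le_one]; exact ⟨hτ.1, hτ.2.le⟩) (by simp))
    simp only
    rw [integral_spliceRamp_of_ge hσ hτ hgτ hu, ← Real.exp_add, hw,
      ← integral_interval_sub_left (hint ⟨by linarith [hτ.1], by linarith⟩)
        (hint ⟨hτ.1, hτ.2.le⟩)]
    ring_nf
  have hτ' : α * σ + (τ - α * σ) = τ := by ring
  have h1 : α * 1 + (τ - α * σ) = 1 := by linarith
  rw [integral_congr hpath, intervalIntegral.integral_const_mul,
    integral_comp_mul_add (fun w => Real.exp (∫ s in (0:ℝ)..w, g s)) hα0.ne', hτ', h1,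
    smul_eq_mul, hα, inv_div]
  ring

lemma FiniteEnergy.spliceRamp (hg : FiniteEnergy g) : FiniteEnergy (spliceRamp g a σ τ) := by
  have hsub : uIcc τ 1 ⊆ uIcc 0 1 := uIcc_subset_uIcc_right (by simp [hτ.1, hτ.2.le])
  refine ⟨intervalIntegrable_spliceRamp hσ hτ (hg.1.mono_set hsub), ?_⟩
  simp_rw [spliceRamp_sq]
  exact intervalIntegrable_spliceRamp hσ hτ ((hg.2.mono_set hsub).const_mul _)

lemma energy_spliceRamp (hg : FiniteEnergy g) :
    energy (spliceRamp g a σ τ)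
      = (a ^ 2 * σ + (1 - τ) / (1 - σ) * ∫ t in τ..1, g t ^ 2) / 2 := by
  have hsub : uIcc τ 1 ⊆ uIcc 0 1 := uIcc_subset_uIcc_right (by simp [hτ.1, hτ.2.le])
  rw [energy, integral_sq_spliceRamp hσ hτ (hg.2.mono_set hsub)]
  ring

lemma integral_exp_integral_spliceRamp (hg : FiniteEnergy g) :
    ∫ u in (0:ℝ)..1, Real.exp (∫ s in (0:ℝ)..u, spliceRamp g a σ τ s)
      = σ * expMean (a * σ) + (1 - σ) / (1 - τ) * Real.exp (a * σ - ∫ s in (0:ℝ)..τ, g s)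
          * ∫ t in τ..1, Real.exp (∫ s in (0:ℝ)..t, g s) := by
  have hcont : ContinuousOn (fun u => Real.exp (∫ s in (0:ℝ)..u, spliceRamp g a σ τ s))
      (uIcc 0 1) :=
    Real.continuous_exp.comp_continuousOn
      (continuousOn_primitive_interval' (hg.spliceRamp hσ hτ).1 left_mem_uIcc)
  have hσ01 : σ ∈ uIcc 0 1 := by rw [uIcc_of_le zero_le_one]; exact Ioo_subset_Icc_self hσ
  rw [← integral_add_adjacent_intervals (b := σ)
    ((hcont.mono (uIcc_subset_uIcc_left hσ01)).intervalIntegrable)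
    ((hcont.mono (uIcc_subset_uIcc_right hσ01)).intervalIntegrable),
    integral_exp_integral_spliceRamp_of_le hσ.1.le,
    integral_exp_integral_spliceRamp_of_ge hσ hτ hg.1]

end spliceRamp

lemma Admissible.log_sq_le {x τ : ℝ} {g : ℝ → ℝ} (hτ : τ ∈ Ico 0 1)
    (hg : Admissible x τ g) : Real.log x ^ 2 ≤ ∫ s in (0:ℝ)..1, g s ^ 2 := by
  have hF : ContinuousOn (fun t => ∫ s in (0:ℝ)..t, g s) (Icc 0 1) := by
    simpa [uIcc_of_le zero_le_one] using continuousOn_primitive_interval' hg.1.1 left_mem_uIcc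
  obtain ⟨t, ht, hFt⟩ := exists_eq_of_integral_eq_mul hτ.2
    (Real.continuous_exp.comp_continuousOn (hF.mono (Icc_subset_Icc_left hτ.1))) hg.2
  have ht01 : t ∈ Icc (0:ℝ) 1 := ⟨hτ.1.trans ht.1, ht.2⟩
  have hlog : Real.log x = ∫ s in (0:ℝ)..t, g s := by
    rw [← hFt]
    exact Real.log_exp _
  calc Real.log x ^ 2 ≤ t * ∫ s in (0:ℝ)..1, g s ^ 2 := hlog ▸ hg.1.sq_integral_le ht01
    _ ≤ ∫ s in (0:ℝ)..1, g s ^ 2 :=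
        mul_le_of_le_one_left (integral_nonneg zero_le_one fun _ _ => sq_nonneg _) ht01.2

lemma log_sq_div_two_le_Jfwd {x τ : ℝ} (hτ : τ ∈ Ico 0 1)
    (hne : ∃ g, Admissible x τ g) : Real.log x ^ 2 / 2 ≤ Jfwd x τ :=
  le_Jfwd hτ.1 hτ.2 hne fun g hg => by
    rw [energy]
    linarith [hg.log_sq_le hτ]

lemma admissible_ramp {x τ : ℝ} (hx : 0 < x) (hτ : τ ∈ Ioo 0 1) :
    Admissible x τ (spliceRamp (fun _ => 0) (Real.log x / τ) τ τ) ∧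
      energy (spliceRamp (fun _ => 0) (Real.log x / τ) τ τ) = Real.log x ^ 2 / (2 * τ) := by
  have hτ' : τ ∈ Ico 0 1 := Ioo_subset_Ico_self hτ
  have h1τ : 1 - τ ≠ 0 := by linarith [hτ.2]
  refine ⟨⟨(finiteEnergy_const 0).spliceRamp hτ hτ', ?_⟩, ?_⟩
  · rw [integral_exp_integral_spliceRamp_of_ge hτ hτ' (finiteEnergy_const 0).1,
      div_mul_cancel₀ _ hτ.1.ne']
    simp [Real.exp_log hx, div_self h1τ, mul_comm]
  · rw [energy_spliceRamp hτ hτ' (finiteEnergy_const 0)]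
    field_simp
    simp

lemma tendsto_Jfwd_nhdsLT_one {x : ℝ} (hx : 0 < x) :
    Tendsto (fun τ => Jfwd x τ) (𝓝[<] 1) (𝓝 (1 / 2 * Real.log x ^ 2)) := by
  rw [one_div_mul_eq_div]
  have hlim : Tendsto (fun τ => Real.log x ^ 2 / (2 * τ)) (𝓝[<] 1)
      (𝓝 (Real.log x ^ 2 / 2)) := by
    have : ContinuousAt (fun τ => Real.log x ^ 2 / (2 * τ)) 1 := by
      fun_prop (disch := norm_num)
    convert this.tendsto.mono_left nhdsWithin_le_nhds using 2
    ring
  refine tendsto_of_tendsto_of_tendsto_of_le_of_le' tendsto_const_nhds hlim ?_ ?_ <;>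
    filter_upwards [Ioo_mem_nhdsLT zero_lt_one] with τ hτ
  · exact log_sq_div_two_le_Jfwd (Ioo_subset_Ico_self hτ) ⟨_, (admissible_ramp hx hτ).1⟩
  · exact (admissible_ramp hx hτ).2 ▸ Jfwd_le_energy hτ.1.le hτ.2 (admissible_ramp hx hτ).1

lemma exists_admissible_zero {x : ℝ} (hx : 0 < x) : ∃ g, Admissible x 0 g := by
  obtain ⟨c, hc⟩ := exists_expMean_eq hx
  refine ⟨fun _ => c, finiteEnergy_const c, ?_⟩
  simp only [intervalIntegral.integral_const, smul_eq_mul, sub_zero, one_mul]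
  simp_rw [mul_comm _ c]
  rw [integral_exp_mul_eq_mul_expMean, one_mul, mul_one, hc]

lemma Jfwd_le_JBS_div {x τ : ℝ} (hx : 0 < x) (hτ : τ ∈ Ioo 0 1) :
    Jfwd x τ ≤ JBS x / (1 - τ) := by
  have h1τ : 0 < 1 - τ := by linarith [hτ.2]
  rw [le_div_iff₀ h1τ, JBS_eq_Jfwd_zero]
  refine le_Jfwd le_rfl zero_lt_one (exists_admissible_zero hx) fun g hg => ?_
  have hsplice : Admissible x τ (spliceRamp g 0 τ 0) := by
    refine ⟨hg.1.spliceRamp hτ ⟨le_rfl, zero_lt_one⟩, ?_⟩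
    rw [integral_exp_integral_spliceRamp_of_ge hτ ⟨le_rfl, zero_lt_one⟩ hg.1.1, hg.2]
    simp
  have henergy : energy (spliceRamp g 0 τ 0) = energy g / (1 - τ) := by
    rw [energy_spliceRamp hτ ⟨le_rfl, zero_lt_one⟩ hg.1, energy]
    field_simp
    ring
  calc Jfwd x τ * (1 - τ) ≤ energy (spliceRamp g 0 τ 0) * (1 - τ) := by
        gcongr
        exact Jfwd_le_energy hτ.1.le hτ.2 hsplice
    _ = energy g := by rw [henergy, div_mul_cancel₀ _ h1τ.ne']

lemma exists_tilt {x σ r c : ℝ} (hx : 0 < x) (hσ : 0 < σ) (hσr : 2 * σ ≤ r) (hr : r ≤ 1)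
    (hc : σ * Real.exp (|c| + r) ≤ x * r / 2) :
    ∃ l, |l| ≤ r ∧ σ * expMean (c + l) + (1 - σ) * x * Real.exp l = x := by
  have hr0 : 0 < r := by linarith
  have hlow : σ * expMean (c + -r) + (1 - σ) * x * Real.exp (-r) ≤ x := by
    have hmean : σ * expMean (c + -r) ≤ x * r / 2 := by
      refine le_trans (mul_le_mul_of_nonneg_left ((expMean_le_exp_abs _).trans ?_) hσ.le) hc
      exact Real.exp_le_exp.mpr ((abs_add_le _ _).trans (by rw [abs_neg, abs_of_pos hr0]))
    have hexp : Real.exp (-r) * (1 + r) ≤ 1 := by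
      calc Real.exp (-r) * (1 + r) ≤ Real.exp (-r) * Real.exp r := by
            gcongr; linarith [Real.add_one_le_exp r]
        _ = 1 := by rw [← Real.exp_add, neg_add_cancel, Real.exp_zero]
    have he : Real.exp (-r) ≤ 1 - r / 2 := by nlinarith [Real.exp_pos (-r)]
    have : (1 - σ) * x * Real.exp (-r) ≤ x * (1 - r / 2) := by
      nlinarith [mul_pos (mul_pos hσ hx) (Real.exp_pos (-r)), mul_le_mul_of_nonneg_left he hx.le]
    linarith
  have hhigh : x ≤ σ * expMean (c + r) + (1 - σ) * x * Real.exp r := by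
    have h1 : 1 ≤ (1 - σ) * (1 + r) := by nlinarith
    have h2 : (1 - σ) * x * (1 + r) ≤ (1 - σ) * x * Real.exp r :=
      mul_le_mul_of_nonneg_left (by linarith [Real.add_one_le_exp r]) (by nlinarith)
    nlinarith [mul_pos hσ (expMean_pos (c + r))]
  obtain ⟨l, hl, hfl⟩ := intermediate_value_Icc (by linarith : -r ≤ r)
    (by fun_prop : Continuous fun l => σ * expMean (c + l) + (1 - σ) * x * Real.exp l
      ).continuousOn ⟨hlow, hhigh⟩
  exact ⟨l, abs_le.mpr hl, hfl⟩

lemma energy_spliceRamp_le {g : ℝ → ℝ} {a σ τ : ℝ} (hg : FiniteEnergy g) (hσ0 : 0 < σ)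
    (hσ : σ ≤ 1 / 2) (hτ : τ ∈ Ico 0 1) :
    energy (spliceRamp g a σ τ) ≤ a ^ 2 * σ / 2 + (1 + 2 * σ) * energy g := by
  have hσ' : σ ∈ Ioo 0 1 := ⟨hσ0, by linarith⟩
  have hα : (1 - τ) / (1 - σ) ≤ 1 + 2 * σ := by
    rw [div_le_iff₀ (by linarith)]
    nlinarith [hτ.1]
  have htail : ∫ t in τ..1, g t ^ 2 ≤ ∫ t in (0:ℝ)..1, g t ^ 2 :=
    integral_mono_interval hτ.1 hτ.2.le le_rfl (ae_of_all _ fun _ => sq_nonneg _) hg.2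
  have htail0 : 0 ≤ ∫ t in τ..1, g t ^ 2 := integral_nonneg hτ.2.le fun _ _ => sq_nonneg _
  rw [energy_spliceRamp hσ' hτ hg, energy]
  nlinarith [mul_le_mul hα htail htail0 (by linarith)]

lemma JBS_le_energy_add {x M K σ : ℝ} (hx : 0 < x) (hK : 2 ≤ K) (hKx : 2 * Real.exp 1 ≤ K * x)
    (hσ : 0 < σ) (hσM : σ * (√(2 * M) + K) ≤ 1) {g : ℝ → ℝ} (hg : Admissible x (σ ^ 2) g)
    (hE : energy g ≤ M) : JBS x ≤ energy g + (4 * M + K ^ 2) * σ := by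
  have hsqrt := Real.sqrt_nonneg (2 * M)
  have hKσ : K * σ ≤ 1 := by nlinarith
  have hσ1 : σ ≤ 1 / 2 := by nlinarith
  have hτ : σ ^ 2 ∈ Ico 0 1 := ⟨sq_nonneg σ, by nlinarith⟩
  set c := ∫ s in (0:ℝ)..σ ^ 2, g s
  have hc2 : c ^ 2 ≤ σ ^ 2 * (2 * M) := by
    have := hg.1.sq_integral_le ⟨hτ.1, hτ.2.le⟩
    rw [energy] at hE
    nlinarith
  have hc : |c| ≤ σ * √(2 * M) := by
    rw [← Real.sqrt_sq hσ.le, ← Real.sqrt_mul (sq_nonneg σ)]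
    exact Real.abs_le_sqrt hc2
  obtain ⟨l, hl, htilt⟩ :
      ∃ l, |l| ≤ K * σ ∧ σ * expMean (c + l) + (1 - σ) * x * Real.exp l = x := by
    refine exists_tilt hx hσ (by nlinarith) hKσ ?_
    calc σ * Real.exp (|c| + K * σ) ≤ σ * Real.exp 1 := by gcongr; nlinarith
      _ ≤ x * (K * σ) / 2 := by nlinarith
  have hadm : Admissible x 0 (spliceRamp g ((c + l) / σ) σ (σ ^ 2)) := by
    refine ⟨hg.1.spliceRamp ⟨hσ, by linarith⟩ hτ, ?_⟩
    rw [integral_exp_integral_spliceRamp ⟨hσ, by linarith⟩ hτ hg.1, hg.2,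
      div_mul_cancel₀ _ hσ.ne', add_sub_cancel_left]
    field_simp [(by linarith [hτ.2] : 1 - σ ^ 2 ≠ 0)]
    linarith
  have hl2 : l ^ 2 ≤ (K * σ) ^ 2 := sq_le_sq' (abs_le.mp hl).1 (abs_le.mp hl).2
  calc JBS x = Jfwd x 0 := JBS_eq_Jfwd_zero x
    _ ≤ energy (spliceRamp g ((c + l) / σ) σ (σ ^ 2)) :=
        Jfwd_le_energy le_rfl zero_lt_one hadm
    _ ≤ ((c + l) / σ) ^ 2 * σ / 2 + (1 + 2 * σ) * energy g :=
        energy_spliceRamp_le hg.1 hσ hσ1 hτ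
    _ ≤ energy g + (4 * M + K ^ 2) * σ := by
        have hramp : ((c + l) / σ) ^ 2 * σ / 2 ≤ (2 * M + K ^ 2) * σ := by
          rw [show ((c + l) / σ) ^ 2 * σ / 2 = (c + l) ^ 2 / (2 * σ) by field_simp,
            div_le_iff₀ (by positivity)]
          nlinarith [sq_nonneg (c - l)]
        nlinarith [mul_le_mul_of_nonneg_left hE (by positivity : 0 ≤ 2 * σ)]

lemma JBS_nonneg (x : ℝ) : 0 ≤ JBS x :=
  Real.sInf_nonneg (by rintro _ ⟨-, g, -, -, rfl⟩; exact energy_nonneg g)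

lemma exists_JBS_sub_le_Jfwd {x : ℝ} (hx : 0 < x) :
    ∃ C, ∀ᶠ τ in 𝓝[>] 0, JBS x - C * √τ ≤ Jfwd x τ := by
  set M := JBS x
  set K := 2 + 2 * Real.exp 1 / x
  have hK : 2 ≤ K := le_add_of_nonneg_right (by positivity)
  have hKx : 2 * Real.exp 1 ≤ K * x := by
    rw [add_mul, div_mul_cancel₀ _ hx.ne']
    linarith
  have hsmall : ∀ᶠ τ in 𝓝[>] 0, √τ * (√(2 * M) + K) < 1 := by
    have : ContinuousAt (fun τ => √τ * (√(2 * M) + K)) 0 := by fun_prop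
    refine (this.tendsto.mono_left nhdsWithin_le_nhds).eventually_lt_const ?_
    simp
  refine ⟨4 * M + K ^ 2, ?_⟩
  filter_upwards [hsmall, Ioo_mem_nhdsGT zero_lt_one] with τ hsmall hτ
  refine le_Jfwd hτ.1.le hτ.2 ⟨_, (admissible_ramp hx hτ).1⟩ fun g hg => ?_
  rcases le_or_gt (energy g) M with hE | hE
  · have := JBS_le_energy_add hx hK hKx (Real.sqrt_pos.mpr hτ.1) hsmall.le
      (by rwa [Real.sq_sqrt hτ.1.le]) hE
    linarith
  · have : 0 ≤ (4 * M + K ^ 2) * √τ := by have := JBS_nonneg x; positivity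
    linarith

lemma tendsto_Jfwd_nhdsGT_zero {x : ℝ} (hx : 0 < x) :
    Tendsto (fun τ => Jfwd x τ) (𝓝[>] 0) (𝓝 (JBS x)) := by
  obtain ⟨C, hC⟩ := exists_JBS_sub_le_Jfwd hx
  have hlow : Tendsto (fun τ => JBS x - C * √τ) (𝓝[>] 0) (𝓝 (JBS x)) := by
    have : ContinuousAt (fun τ => JBS x - C * √τ) 0 := by fun_prop
    simpa using this.tendsto.mono_left nhdsWithin_le_nhds
  have hup : Tendsto (fun τ => JBS x / (1 - τ)) (𝓝[>] 0) (𝓝 (JBS x)) := by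
    have : ContinuousAt (fun τ => JBS x / (1 - τ)) 0 := by fun_prop (disch := norm_num)
    simpa using this.tendsto.mono_left nhdsWithin_le_nhds
  refine tendsto_of_tendsto_of_tendsto_of_le_of_le' hlow hup hC ?_
  filter_upwards [Ioo_mem_nhdsGT zero_lt_one] with τ hτ using Jfwd_le_JBS_div hx hτ

/-- For every `x > 0`, (i) `J_fwd(x, τ) → (1/2)(log x)²` as `τ → 1⁻`, and
(ii) `J_fwd(x, τ) → J_BS(x)` as `τ → 0⁺`. -/
theorem Jfwd_limits (x : ℝ) (hx : 0 < x) :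
    Filter.Tendsto (fun τ : ℝ => Jfwd x τ) (nhdsWithin 1 (Iio 1))
      (nhds ((1 / 2) * (Real.log x) ^ 2)) ∧
    Filter.Tendsto (fun τ : ℝ => Jfwd x τ) (nhdsWithin 0 (Ioi 0)) (nhds (JBS x)) :=
  ⟨tendsto_Jfwd_nhdsLT_one hx, tendsto_Jfwd_nhdsGT_zero hx⟩
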